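/- Let 0 ≤ δ ≤ d and let i_1 < i_2 < ⋯ < i_δ be unbarred elements of J with i_δ < r (the condition being vacuous when δ = 0), and let i_{δ+1},…,i_d be barred elements of J. Then in Λ^d ℂ^{2r}: Λ^d(X)(v_{i_1} ∧ ⋯ ∧ v_{i_d}) = Σ_{(j_1,…,j_d) ∈ V} ( ∏_{ζ=1}^{δ} Y_{j_ζ − 1}/Y_{i_ζ} )·( ∏_{ζ=δ+1}^{d} Y_{|i_ζ|}/Y_{|j_ζ| − 1} )·v_{j_1} ∧ ⋯ ∧ v_{j_d}, where V is the set of tuples (j_1,…,j_d) in J with j_ζ ∈ {i_ζ, i_ζ + 1} for 1 ≤ ζ ≤ δ, j_1 < ⋯ < j_δ, and j_ζ barred with |j_ζ| ≤ |i_ζ| for δ+1 ≤ ζ ≤ d. -/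

import Mathlib

noncomputable section
open Matrix BigOperators

namespace CTypeMinors

/-- Standard basis vector of `ℂ^{2r}`, indexed by a natural number `a` (0-indexed):
`a = j - 1` encodes the unbarred element `j ∈ J`, and `a = 2r - j` encodes the barred
element `j̄ ∈ J` (this is the bijection `ι` shifted to be 0-indexed; the natural order
on `{0, …, 2r-1}` corresponds to the total order on `J`). -/
def vv (r a : ℕ) : Fin (2*r) → ℂ := fun k => if (k : ℕ) = a then 1 else 0

/-- `v_j` for unbarred `j` (`1 ≤ j ≤ r`); note `vu r (r+1) = v_{r̄}`. -/
def vu (r j : ℕ) : Fin (2*r) → ℂ := vv r (j - 1)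

/-- `v_{j̄}` for barred `j̄` (`1 ≤ j ≤ r`). -/
def vb (r j : ℕ) : Fin (2*r) → ℂ := vv r (2*r - j)

/-- The matrix `f_i` (`1 ≤ i ≤ r`): `f_i v_i = v_{i+1}`, `f_i v_{(i+1)‾} = v_{ī}`
(for `i = r` these two conditions both read `f_r v_r = v_{r̄}`), all other basis
vectors are sent to `0`. -/
def fMat (r i : ℕ) : Matrix (Fin (2*r)) (Fin (2*r)) ℂ :=
  Matrix.of fun k l =>
    if ((l : ℕ) + 1 = i ∧ (k : ℕ) = i) ∨ ((l : ℕ) + i + 1 = 2*r ∧ (k : ℕ) + i = 2*r)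
    then 1 else 0

/-- `e_i = f_iᵀ`. -/
def eMat (r i : ℕ) : Matrix (Fin (2*r)) (Fin (2*r)) ℂ := (fMat r i)ᵀ

/-- `x_i(t) = 1 + t e_i`. -/
def xMat (r i : ℕ) (t : ℂ) : Matrix (Fin (2*r)) (Fin (2*r)) ℂ := 1 + t • eMat r i

/-- `y_i(t) = 1 + t f_i`. -/
def yMat (r i : ℕ) (t : ℂ) : Matrix (Fin (2*r)) (Fin (2*r)) ℂ := 1 + t • fMat r i

/-- `α_i^∨(c)`: diagonal, acting by `c` on `v_i, v_{(i+1)‾}`, by `c⁻¹` on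
`v_{i+1}, v_{ī}`, and by `1` elsewhere (for `i = r`: by `c` on `v_r`, `c⁻¹` on `v_{r̄}`). -/
def alMat (r i : ℕ) (c : ℂ) : Matrix (Fin (2*r)) (Fin (2*r)) ℂ :=
  Matrix.diagonal fun k =>
    if (k : ℕ) + 1 = i ∨ (k : ℕ) + i + 1 = 2*r then c
    else if (k : ℕ) = i ∨ (k : ℕ) + i = 2*r then c⁻¹
    else 1

/-- `x_{-i}(t) = y_i(t) ⬝ α_i^∨(t⁻¹)`. -/
def xmMat (r i : ℕ) (t : ℂ) : Matrix (Fin (2*r)) (Fin (2*r)) ℂ :=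
  yMat r i t * alMat r i t⁻¹

/-- Entry of a `2r × 2r` matrix at (0-indexed) natural number indices. -/
def ent {r : ℕ} (X : Matrix (Fin (2*r)) (Fin (2*r)) ℂ) (a b : ℕ) : ℂ :=
  dotProduct (vv r a) (X.mulVec (vv r b))

/-- Ordered product `g 1 * g 2 * ⋯ * g n` of matrices. -/
def oprod {N : ℕ} (g : ℕ → Matrix (Fin N) (Fin N) ℂ) (n : ℕ) : Matrix (Fin N) (Fin N) ℂ :=
  ((List.range n).map fun l => g (l + 1)).prod

/-- `x^L(Y) = (x_{-1}(Y_{1,1})⋯x_{-r}(Y_{1,r})) ⋯ x_{-1}(Y_{m,1})⋯x_{-d}(Y_{m,d})`. -/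
def xL (r m d : ℕ) (Y : ℕ → ℕ → ℂ) : Matrix (Fin (2*r)) (Fin (2*r)) ℂ :=
  oprod (fun s => oprod (fun l => xmMat r l (Y s l)) (if s = m then d else r)) m

/-- The 0-indexed row `ι(R_i)` for `i : Fin d` (0-indexed `i`): the `i`-th entry
of `R` is `v_{m'+1+i}` when `(i+1) + m' ≤ r` and `v_{(d-i)‾}` otherwise. -/
def rowR (r m' d i : ℕ) : ℕ := if i + 1 + m' ≤ r then m' + i else 2*r + i - d

/-- `Δ^L(Y)`: determinant of the `d × d` submatrix of `x^L(Y)` with rows `ι(R)` and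
columns `1, …, d`. -/
def DeltaL (r m m' d : ℕ) (Y : ℕ → ℕ → ℂ) : ℂ :=
  (Matrix.of fun i j : Fin d => ent (xL r m d Y) (rowR r m' d (i : ℕ)) (j : ℕ)).det

/-- `C̄(l,k) = Y_{l,k-1}/Y_{l,k}`. -/
def Cbar (Y : ℕ → ℕ → ℂ) (l k : ℕ) : ℂ := Y l (k - 1) / Y l k

/-- `C(l,k) = Y_{l,k+1}/Y_{l+1,k}`. -/
def Cc (Y : ℕ → ℕ → ℂ) (l k : ℕ) : ℂ := Y l (k + 1) / Y (l + 1) k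

/-- `|·| : J → ℕ` in the 0-indexed natural encoding of `J`. -/
def absV (r p : ℕ) : ℕ := if p < r then p + 1 else 2*r - p

/-! The matrix `X` acts on basis vectors by an explicit triangular rule. An unbarred `v_a` with
`a + 1 < r` (indices 0-based, as in `vv`) is moved only by `x_{-a}` and `x_{-(a+1)}` and goes to
`(Y_a / Y_{a+1}) v_a + v_{a+1}`; a barred `v_b` spreads, by induction through the factors
`x_{-k}`, over all `v_c` with `c ≥ b`, with coefficients `Y_{2r-b} / Y_{2r-c-1}`. Expanding
`Λ^d(X)` multilinearly, the coefficient of `v_{j_1} ∧ ⋯ ∧ v_{j_d}` is a product of these entries,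
which vanishes unless the `j_ζ` satisfy the membership conditions of `V`. If those hold but the
ordering fails, two of the first `δ` indices coincide (as `j_ζ ∈ {i_ζ, i_ζ + 1}` and the `i_ζ`
increase strictly), so the wedge itself vanishes. -/

theorem _root_.ExteriorAlgebra.map_toLin'_ιMulti_single {R m n : Type*} [CommRing R]
    [Fintype m] [DecidableEq m] [Fintype n] [DecidableEq n] (M : Matrix m n R) {d : ℕ}
    (I : Fin d → n) :
    ExteriorAlgebra.map (toLin' M) (ExteriorAlgebra.ιMulti R d fun ζ => Pi.single (I ζ) 1) =
      ∑ J : Fin d → m,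
        (∏ ζ, M (J ζ) (I ζ)) • ExteriorAlgebra.ιMulti R d fun ζ => Pi.single (J ζ) 1 := by
  have hcol : ∀ j, toLin' M (Pi.single j 1) = ∑ i, M i j • Pi.single i 1 := fun j => by
    rw [toLin'_apply, mulVec_single_one]
    exact pi_eq_sum_univ' _
  have hexpand := (ExteriorAlgebra.ιMulti R d (M := m → R)).toMultilinearMap.map_sum
    fun ζ i => M i (I ζ) • (Pi.single i 1 : m → R)
  simp only [AlternatingMap.coe_multilinearMap] at hexpand
  simp_rw [ExteriorAlgebra.map_apply_ιMulti, Function.comp_def, hcol, hexpand,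
    AlternatingMap.map_smul_univ]

section

variable {r : ℕ}

theorem vv_eq_single {a : ℕ} (ha : a < 2*r) : vv r a = Pi.single ⟨a, ha⟩ 1 := by
  funext k
  simp [vv, Pi.single_apply, Fin.ext_iff]

theorem vv_coe (k : Fin (2*r)) : vv r k = Pi.single k 1 := vv_eq_single k.isLt

theorem apply_eq_mulVec_vv (M : Matrix (Fin (2*r)) (Fin (2*r)) ℂ) {a : ℕ} (ha : a < 2*r)
    (b : Fin (2*r)) : M b ⟨a, ha⟩ = (M *ᵥ vv r a) b := by
  rw [vv_eq_single ha, mulVec_single_one]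
  rfl

theorem fMat_mulVec_vv (i : ℕ) {a : ℕ} (ha : a < 2*r) :
    fMat r i *ᵥ vv r a = if a + 1 = i ∨ a + i + 1 = 2*r then vv r (a+1) else 0 := by
  rw [vv_eq_single ha, mulVec_single_one]
  funext k
  rw [apply_ite (fun v : Fin (2*r) → ℂ => v k)]
  simp only [col_apply, fMat, of_apply, vv, Pi.zero_apply]
  split_ifs <;> first | rfl | omega

theorem alMat_mulVec_vv (i : ℕ) (c : ℂ) (a : ℕ) :
    alMat r i c *ᵥ vv r a =
      (if a + 1 = i ∨ a + i + 1 = 2*r then c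
       else if a = i ∨ a + i = 2*r then c⁻¹ else 1) • vv r a := by
  funext k
  rw [alMat, mulVec_diagonal]
  simp only [vv, Pi.smul_apply, smul_eq_mul]
  split_ifs <;> simp_all

theorem xmMat_mulVec_vv (i : ℕ) {t : ℂ} (ht : t ≠ 0) {a : ℕ} (ha : a < 2*r) :
    xmMat r i t *ᵥ vv r a =
      if a + 1 = i ∨ a + i + 1 = 2*r then t⁻¹ • vv r a + vv r (a+1)
      else if a = i ∨ a + i = 2*r then t • vv r a
      else vv r a := by
  rw [xmMat, ← mulVec_mulVec, alMat_mulVec_vv, mulVec_smul, yMat, add_mulVec, one_mulVec,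
    smul_mulVec, fMat_mulVec_vv i ha]
  split_ifs <;> simp [smul_add, smul_smul, ht]

theorem oprod_zero {N : ℕ} (g : ℕ → Matrix (Fin N) (Fin N) ℂ) : oprod g 0 = 1 := rfl

theorem oprod_succ {N : ℕ} (g : ℕ → Matrix (Fin N) (Fin N) ℂ) (n : ℕ) :
    oprod g (n+1) = oprod g n * g (n+1) := by
  simp [oprod, List.range_succ]

theorem oprod_mulVec_eq_of_fixed {N : ℕ} (g : ℕ → Matrix (Fin N) (Fin N) ℂ) {m n : ℕ}
    (hmn : m ≤ n) {v : Fin N → ℂ} (hv : ∀ l, m < l → l ≤ n → g l *ᵥ v = v) :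
    oprod g n *ᵥ v = oprod g m *ᵥ v := by
  induction n, hmn using Nat.le_induction with
  | base => rfl
  | succ n hmn ih =>
    rw [oprod_succ, ← mulVec_mulVec, hv (n+1) (by omega) le_rfl]
    exact ih fun l hml hln => hv l hml (by omega)

theorem xmMat_mulVec_vv_of_far {i : ℕ} (t : ℂ) {a : ℕ} (ha : a < 2*r)
    (h : ¬(a + 1 = i ∨ a + i + 1 = 2*r)) (h' : ¬(a = i ∨ a + i = 2*r)) :
    xmMat r i t *ᵥ vv r a = vv r a := by
  rw [xmMat, ← mulVec_mulVec, alMat_mulVec_vv, if_neg h, if_neg h', one_smul, yMat, add_mulVec,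
    one_mulVec, smul_mulVec, fMat_mulVec_vv i ha, if_neg h, smul_zero, add_zero]

variable (Y : ℕ → ℂ)

theorem oprod_xmMat_mulVec_vv_of_far {m n a : ℕ} (hmn : m ≤ n) (ha : a < 2*r)
    (hfar : ∀ l, m < l → l ≤ n → a + 1 ≠ l ∧ a ≠ l ∧ a + l + 1 ≠ 2*r ∧ a + l ≠ 2*r) :
    oprod (fun l => xmMat r l (Y l)) n *ᵥ vv r a =
      oprod (fun l => xmMat r l (Y l)) m *ᵥ vv r a := by
  refine oprod_mulVec_eq_of_fixed _ hmn fun l hml hln => ?_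
  obtain ⟨h1, h2, h3, h4⟩ := hfar l hml hln
  exact xmMat_mulVec_vv_of_far _ ha (by omega) (by omega)

theorem oprod_xmMat_mulVec_vv_of_unbarred (hY0 : Y 0 = 1)
    (hYne : ∀ l, 1 ≤ l → l ≤ r → Y l ≠ 0) {a : ℕ} (ha : a + 1 < r) :
    oprod (fun l => xmMat r l (Y l)) r *ᵥ vv r a = (Y a / Y (a+1)) • vv r a + vv r (a+1) := by
  have hdiag : oprod (fun l => xmMat r l (Y l)) a *ᵥ vv r a = Y a • vv r a := by
    cases a with
    | zero => rw [oprod_zero, one_mulVec, hY0, one_smul]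
    | succ a =>
      rw [oprod_succ, ← mulVec_mulVec, xmMat_mulVec_vv _ (hYne _ (by omega) (by omega))
        (by omega), if_neg (by omega), if_pos (Or.inl rfl), mulVec_smul,
        oprod_xmMat_mulVec_vv_of_far Y (Nat.zero_le a) (by omega) (fun l _ _ => by omega),
        oprod_zero, one_mulVec]
  rw [oprod_xmMat_mulVec_vv_of_far Y (m := a+1) (by omega) (by omega) (fun l _ _ => by omega),
    oprod_succ, ← mulVec_mulVec, xmMat_mulVec_vv _ (hYne _ (by omega) (by omega)) (by omega),
    if_pos (Or.inl rfl), mulVec_add, mulVec_smul, hdiag,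
    oprod_xmMat_mulVec_vv_of_far Y (Nat.zero_le a) (by omega) (fun l _ _ => by omega),
    oprod_zero, one_mulVec, smul_smul, div_eq_inv_mul]

theorem oprod_xmMat_mulVec_vv_two_mul_sub (hY0 : Y 0 = 1) (hYne : ∀ l, 1 ≤ l → l ≤ r → Y l ≠ 0)
    {k : ℕ} (hk : k < r) :
    oprod (fun l => xmMat r l (Y l)) k *ᵥ vv r (2*r - k - 1) =
      fun b : Fin (2*r) => if 2*r - k - 1 ≤ (b : ℕ) then (Y (2*r - b - 1))⁻¹ else 0 := by
  induction k with
  | zero =>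
    funext b
    rw [oprod_zero, one_mulVec]
    simp only [vv]
    split_ifs <;> first | omega | rfl | rw [show 2*r - (b : ℕ) - 1 = 0 by omega, hY0, inv_one]
  | succ k ih =>
    rw [oprod_succ, ← mulVec_mulVec, xmMat_mulVec_vv _ (hYne _ (by omega) (by omega))
      (by omega), if_pos (Or.inr (by omega)), mulVec_add, mulVec_smul,
      oprod_xmMat_mulVec_vv_of_far Y (Nat.zero_le k) (by omega) (fun l _ _ => by omega),
      oprod_zero, one_mulVec, show 2*r - (k+1) - 1 + 1 = 2*r - k - 1 by omega, ih (by omega)]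
    funext b
    simp only [vv, Pi.add_apply, Pi.smul_apply, smul_eq_mul]
    split_ifs <;> first | omega | simp [show 2*r - (b : ℕ) - 1 = k + 1 by omega] | simp

theorem oprod_xmMat_mulVec_vv_of_barred (hY0 : Y 0 = 1)
    (hYne : ∀ l, 1 ≤ l → l ≤ r → Y l ≠ 0) {a : ℕ} (ha : r ≤ a) (ha' : a < 2*r) :
    oprod (fun l => xmMat r l (Y l)) r *ᵥ vv r a =
      fun b : Fin (2*r) => if a ≤ (b : ℕ) then Y (2*r - a) / Y (2*r - b - 1) else 0 := by
  obtain ⟨k, rfl, hk⟩ : ∃ k, a = 2*r - k - 1 ∧ k < r := ⟨2*r - a - 1, by omega, by omega⟩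
  rw [oprod_xmMat_mulVec_vv_of_far Y (m := k+1) (by omega) ha' (fun l _ _ => by omega),
    oprod_succ, ← mulVec_mulVec, xmMat_mulVec_vv _ (hYne _ (by omega) (by omega)) ha',
    if_neg (by omega), if_pos (Or.inr (by omega)), mulVec_smul,
    oprod_xmMat_mulVec_vv_two_mul_sub Y hY0 hYne hk, show 2*r - (2*r - k - 1) = k + 1 by omega]
  funext b
  simp only [Pi.smul_apply, smul_eq_mul]
  split_ifs <;> simp [div_eq_mul_inv]

theorem oprod_xmMat_apply_of_unbarred (hY0 : Y 0 = 1) (hYne : ∀ l, 1 ≤ l → l ≤ r → Y l ≠ 0)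
    {a : ℕ} (ha : a + 1 < r) (b : Fin (2*r)) :
    oprod (fun l => xmMat r l (Y l)) r b ⟨a, by omega⟩ =
      if (b : ℕ) = a ∨ (b : ℕ) = a + 1 then Y b / Y (a+1) else 0 := by
  have hYa := hYne (a + 1) (by omega) ha.le
  rw [apply_eq_mulVec_vv (oprod (fun l => xmMat r l (Y l)) r),
    oprod_xmMat_mulVec_vv_of_unbarred Y hY0 hYne ha]
  simp only [vv, Pi.add_apply, Pi.smul_apply, smul_eq_mul]
  split_ifs <;> first | omega | simp_all

theorem oprod_xmMat_apply_of_barred (hY0 : Y 0 = 1) (hYne : ∀ l, 1 ≤ l → l ≤ r → Y l ≠ 0)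
    {a : ℕ} (ha : r ≤ a) (ha' : a < 2*r) (b : Fin (2*r)) :
    oprod (fun l => xmMat r l (Y l)) r b ⟨a, ha'⟩ =
      if a ≤ (b : ℕ) then Y (2*r - a) / Y (2*r - b - 1) else 0 := by
  rw [apply_eq_mulVec_vv (oprod (fun l => xmMat r l (Y l)) r),
    oprod_xmMat_mulVec_vv_of_barred Y hY0 hYne ha ha']

end

theorem exists_ne_apply_eq_of_not_lt {d N δ : ℕ} {I : Fin d → ℕ} {J : Fin d → Fin N}
    (hI : ∀ ζ η : Fin d, (η : ℕ) < δ → ζ < η → I ζ < I η)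
    (hJ : ∀ ζ : Fin d, (ζ : ℕ) < δ → (J ζ : ℕ) = I ζ ∨ (J ζ : ℕ) = I ζ + 1)
    (hJ' : ¬∀ ζ η : Fin d, (η : ℕ) < δ → ζ < η → J ζ < J η) :
    ∃ ζ η, ζ ≠ η ∧ J ζ = J η := by
  push Not at hJ'
  obtain ⟨ζ, η, hη, hζη, hle⟩ := hJ'
  have hJζ := hJ ζ (lt_of_le_of_lt (Fin.le_def.mp hζη.le) hη)
  have hJη := hJ η hη
  have hIζη := hI ζ η hη hζη
  exact ⟨ζ, η, hζη.ne, Fin.ext (by rw [Fin.le_def] at hle; omega)⟩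

open Classical in
theorem lambda_on_wedge_expansion_short_general
    (r : ℕ) (Y : ℕ → ℂ) (hY0 : Y 0 = 1)
    (hYne : ∀ l, 1 ≤ l → l ≤ r → Y l ≠ 0)
    (d : ℕ) (δ : ℕ) (I : Fin d → ℕ)
    (hIu : ∀ ζ : Fin d, (ζ : ℕ) < δ → I ζ + 1 < r)
    (hIinc : ∀ ζ η : Fin d, (η : ℕ) < δ → ζ < η → I ζ < I η)
    (hIb : ∀ ζ : Fin d, δ ≤ (ζ : ℕ) → r ≤ I ζ ∧ I ζ < 2*r) :
    (ExteriorAlgebra.map (Matrix.toLin' (oprod (fun l => xmMat r l (Y l)) r)))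
      (ExteriorAlgebra.ιMulti ℂ d (fun ζ : Fin d => vv r (I ζ))) =
    ∑ Jf : Fin d → Fin (2*r),
      if ((∀ ζ : Fin d, (ζ : ℕ) < δ → ((Jf ζ : ℕ) = I ζ ∨ (Jf ζ : ℕ) = I ζ + 1)) ∧
          (∀ ζ η : Fin d, (η : ℕ) < δ → ζ < η → Jf ζ < Jf η) ∧
          (∀ ζ : Fin d, δ ≤ (ζ : ℕ) → r ≤ (Jf ζ : ℕ) ∧ 2*r - (Jf ζ : ℕ) ≤ 2*r - I ζ))
      then (∏ ζ : Fin d,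
              if (ζ : ℕ) < δ then Y (Jf ζ : ℕ) / Y (I ζ + 1)
              else Y (2*r - I ζ) / Y (2*r - (Jf ζ : ℕ) - 1)) •
            ExteriorAlgebra.ιMulti ℂ d (fun ζ : Fin d => vv r (Jf ζ : ℕ))
      else 0 := by
  have hI : ∀ ζ, I ζ < 2*r := fun ζ => by
    by_cases hζ : (ζ : ℕ) < δ
    · have := hIu ζ hζ
      omega
    · exact (hIb ζ (by omega)).2
  have hentry : ∀ ζ (j : Fin (2*r)), oprod (fun l => xmMat r l (Y l)) r j ⟨I ζ, hI ζ⟩ =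
      if ((ζ : ℕ) < δ → ((j : ℕ) = I ζ ∨ (j : ℕ) = I ζ + 1)) ∧
          (δ ≤ (ζ : ℕ) → r ≤ (j : ℕ) ∧ 2*r - (j : ℕ) ≤ 2*r - I ζ)
      then if (ζ : ℕ) < δ then Y j / Y (I ζ + 1) else Y (2*r - I ζ) / Y (2*r - j - 1)
      else 0 := fun ζ j => by
    by_cases hζ : (ζ : ℕ) < δ
    · rw [oprod_xmMat_apply_of_unbarred Y hY0 hYne (hIu ζ hζ)]
      simp [hζ]
    · obtain ⟨hr, hI'⟩ := hIb ζ (by omega)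
      rw [oprod_xmMat_apply_of_barred Y hY0 hYne hr hI', if_neg hζ]
      exact if_congr ⟨fun h => ⟨fun _ => by omega, by omega⟩, fun h => by omega⟩ rfl rfl
  rw [show (fun ζ => vv r (I ζ)) = fun ζ => Pi.single ⟨I ζ, hI ζ⟩ 1 from
      funext fun ζ => vv_eq_single (hI ζ), ExteriorAlgebra.map_toLin'_ιMulti_single]
  refine Finset.sum_congr rfl fun J _ => ?_
  simp only [hentry, Fintype.prod_ite_zero, vv_coe, ite_smul, zero_smul]
  by_cases hB : ∀ ζ η : Fin d, (η : ℕ) < δ → ζ < η → J ζ < J η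
  · exact if_congr (by rw [forall_and]; tauto) rfl rfl
  rw [if_neg fun h : _ ∧ _ ∧ _ => hB h.2.1]
  split_ifs with hAC
  · obtain ⟨ζ, η, hne, hrep⟩ := exists_ne_apply_eq_of_not_lt hIinc (fun ζ => (hAC ζ).1) hB
    rw [AlternatingMap.map_eq_zero_of_eq _ _ (by rw [hrep]) hne, smul_zero]
  · rfl

open Classical in
theorem lambda_on_wedge_expansion_short
    (r : ℕ) (hr : 2 ≤ r) (Y : ℕ → ℂ) (hY0 : Y 0 = 1)
    (hYne : ∀ l, 1 ≤ l → l ≤ r → Y l ≠ 0)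
    (d : ℕ) (hd1 : 1 ≤ d) (δ : ℕ) (hδ : δ ≤ d) (I : Fin d → ℕ)
    (hIu : ∀ ζ : Fin d, (ζ : ℕ) < δ → I ζ + 1 < r)
    (hIinc : ∀ ζ η : Fin d, (η : ℕ) < δ → ζ < η → I ζ < I η)
    (hIb : ∀ ζ : Fin d, δ ≤ (ζ : ℕ) → r ≤ I ζ ∧ I ζ < 2*r) :
    (ExteriorAlgebra.map (Matrix.toLin' (oprod (fun l => xmMat r l (Y l)) r)))
      (ExteriorAlgebra.ιMulti ℂ d (fun ζ : Fin d => vv r (I ζ))) =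
    ∑ Jf : Fin d → Fin (2*r),
      if ((∀ ζ : Fin d, (ζ : ℕ) < δ → ((Jf ζ : ℕ) = I ζ ∨ (Jf ζ : ℕ) = I ζ + 1)) ∧
          (∀ ζ η : Fin d, (η : ℕ) < δ → ζ < η → Jf ζ < Jf η) ∧
          (∀ ζ : Fin d, δ ≤ (ζ : ℕ) → r ≤ (Jf ζ : ℕ) ∧ 2*r - (Jf ζ : ℕ) ≤ 2*r - I ζ))
      then (∏ ζ : Fin d,
              if (ζ : ℕ) < δ then Y (Jf ζ : ℕ) / Y (I ζ + 1)
              else Y (2*r - I ζ) / Y (2*r - (Jf ζ : ℕ) - 1)) •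
            ExteriorAlgebra.ιMulti ℂ d (fun ζ : Fin d => vv r (Jf ζ : ℕ))
      else 0 :=
  lambda_on_wedge_expansion_short_general r Y hY0 hYne d δ I hIu hIinc hIb

end CTypeMinors
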